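/- arXiv:2602.01484 — 11 statements merged into one kernel-verified Lean document; each statement's English description precedes it below -/
import Mathlib

section
/- For all sufficiently small θ > 0, there exists φ ∈ (0, π/4) satisfying (1 - tan φ)·cos(φ + θ) = 1 - sin(φ + θ). -/
open Real Set

theorem stmt_0 : ∃ θ₀ > (0:ℝ), ∀ θ : ℝ, 0 < θ → θ < θ₀ →
    ∃ φ ∈ Set.Ioo (0:ℝ) (Real.pi / 4),
      (1 - Real.tan φ) * Real.cos (φ + θ) = 1 - Real.sin (φ + θ) := by
  refine ⟨Real.pi / 4, by positivity, fun θ hθ hθ' => ?_⟩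
  set f : ℝ → ℝ := fun φ => (1 - Real.tan φ) * Real.cos (φ + θ) - (1 - Real.sin (φ + θ))
    with hf
  have hpi : (0:ℝ) < Real.pi / 4 := by positivity
  have hcont : ContinuousOn f (Set.Icc 0 (Real.pi / 4)) := by
    apply ContinuousOn.sub
    · apply ContinuousOn.mul
      · apply ContinuousOn.sub continuousOn_const
        apply Real.continuousOn_tan.mono
        intro x hx
        simp only [Set.mem_setOf_eq]
        have : Real.cos x > 0 := by
          apply Real.cos_pos_of_mem_Ioo
          constructor
          · linarith [hx.1, Real.pi_pos]
          · have := hx.2; linarith [Real.pi_pos]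
        exact this.ne'
      · exact (Real.continuous_cos.comp (continuous_id.add continuous_const)).continuousOn
    · exact (continuous_const.sub (Real.continuous_sin.comp
        (continuous_id.add continuous_const))).continuousOn
  have hθlt : θ < Real.pi / 2 := by linarith [hθ', Real.pi_pos]
  have hsin : 0 < Real.sin θ := Real.sin_pos_of_pos_of_lt_pi hθ (by linarith [Real.pi_pos])
  have hcos : 0 < Real.cos θ := Real.cos_pos_of_mem_Ioo ⟨by linarith [Real.pi_pos], hθlt⟩
  have hsin1 : Real.sin θ < 1 := by
    have : Real.sin θ < Real.sin (Real.pi / 2) :=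
      Real.strictMonoOn_sin ⟨by linarith [Real.pi_pos], by linarith⟩
        ⟨by linarith [Real.pi_pos], le_refl _⟩ hθlt
    rwa [Real.sin_pi_div_two] at this
  have hcos1 : Real.cos θ ≤ 1 := Real.cos_le_one θ
  have hf0 : 0 < f 0 := by
    simp only [hf, Real.tan_zero, sub_zero, one_mul, zero_add]
    nlinarith [Real.sin_sq_add_cos_sq θ]
  have hf1 : f (Real.pi / 4) < 0 := by
    simp only [hf, Real.tan_pi_div_four, sub_self, zero_mul, zero_sub, neg_neg, neg_lt_zero,
      sub_pos]
    have : Real.sin (Real.pi / 4 + θ) < Real.sin (Real.pi / 2) := by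
      apply Real.strictMonoOn_sin ⟨by linarith [Real.pi_pos], by linarith⟩
        ⟨by linarith [Real.pi_pos], by linarith⟩
      linarith
    rw [Real.sin_pi_div_two] at this
    linarith
  have := intermediate_value_Ioo' (le_of_lt hpi) hcont (a := 0)
  have h0 : (0:ℝ) ∈ Set.Ioo (f (Real.pi / 4)) (f 0) := ⟨hf1, hf0⟩
  obtain ⟨φ, hφ, hfφ⟩ := this h0
  exact ⟨φ, hφ, by have := hfφ; simp only [hf] at this; linarith⟩
end

section
/- There exist constants C > 0 and θ₀ > 0 such that for all θ ∈ (0, θ₀), any φ ∈ (0, π/4) satisfying (1 - tan φ)·cos(φ + θ) = 1 - sin(φ + θ) also satisfies |φ - √(2θ)| ≤ C·θ. -/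
/-!
Put `x = φ + θ`. Since `sin θ = sin (φ + θ) cos φ - cos (φ + θ) sin φ`, the equation says
`cos φ · (1 - cos x) = sin θ`. As `cos φ = 1 + O(x²)`, `1 - cos x = x²/2 + O(x⁴)` and
`sin θ = θ + O(θ³)`, first `x² = O(θ)` and then `x² = 2θ + O(θ²)`. Taking square roots,
`x = √(2θ) + O(θ^{3/2})`, so `φ = x - θ = √(2θ) + O(θ)`.
-/

open Real

theorem cos_mul_one_sub_cos_add_eq_sin {φ θ : ℝ} (hφ : cos φ ≠ 0)
    (h : (1 - tan φ) * cos (φ + θ) = 1 - sin (φ + θ)) :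
    cos φ * (1 - cos (φ + θ)) = sin θ := by
  have hsub : sin θ = sin (φ + θ) * cos φ - cos (φ + θ) * sin φ := by
    simpa using sin_sub (φ + θ) φ
  rw [tan_eq_sin_div_cos] at h
  field_simp at h
  linear_combination -h - hsub

theorem sq_div_two_sub_le_one_sub_cos {x : ℝ} (hx : |x| ≤ 1) :
    x ^ 2 / 2 - 5 / 96 * x ^ 4 ≤ 1 - cos x := by
  have h := (abs_le.1 (cos_bound hx)).2
  rw [pow_abs, abs_of_nonneg (by positivity : (0:ℝ) ≤ x ^ 4)] at h
  linarith

theorem abs_sub_sqrt_le {x b : ℝ} (hx : 0 ≤ x) (hb : 0 < b) :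
    |x - √b| ≤ |x ^ 2 - b| / √b := by
  have hsb : 0 < √b := sqrt_pos.2 hb
  rw [le_div_iff₀ hsb]
  calc |x - √b| * √b ≤ |x - √b| * (x + √b) := by gcongr; linarith
    _ = |(x - √b) * (x + √b)| := by rw [abs_mul, abs_of_pos (by positivity : 0 < x + √b)]
    _ = |x ^ 2 - b| := by
      congr 1
      linear_combination -sq_sqrt hb.le

theorem abs_sub_sqrt_two_mul_le {x θ K : ℝ} (hx : 0 ≤ x) (hθ : 0 < θ) (hθ2 : θ ≤ 2) (hK : 0 ≤ K)
    (h : |x ^ 2 - 2 * θ| ≤ K * θ ^ 2) : |x - √(2 * θ)| ≤ K * θ := by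
  have hs : 0 < √(2 * θ) := sqrt_pos.2 (by positivity)
  have hθs : θ ≤ √(2 * θ) := le_sqrt_of_sq_le (by nlinarith)
  calc |x - √(2 * θ)| ≤ |x ^ 2 - 2 * θ| / √(2 * θ) := abs_sub_sqrt_le hx (by positivity)
    _ ≤ K * θ ^ 2 / √(2 * θ) := by gcongr
    _ ≤ K * θ := by
      rw [div_le_iff₀ hs]
      calc K * θ ^ 2 = K * θ * θ := by ring
        _ ≤ K * θ * √(2 * θ) := by gcongr

theorem add_sq_le_of_cos_mul_one_sub_cos_add_eq_sin {φ θ : ℝ} (hφ : 0 ≤ φ) (hθ : 0 ≤ θ)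
    (hx : φ + θ ≤ 1) (h : cos φ * (1 - cos (φ + θ)) = sin θ) :
    (φ + θ) ^ 2 ≤ 2 * θ + 40 * θ ^ 2 := by
  set x := φ + θ
  have hd := sq_div_two_sub_le_one_sub_cos (abs_le.2 ⟨by linarith, hx⟩ : |x| ≤ 1)
  have hc : 1 - x ^ 2 / 2 ≤ cos φ := (one_sub_sq_div_two_le_cos).trans' (by nlinarith)
  have hx2 : x ^ 2 ≤ 1 := by nlinarith
  have hd0 : 0 ≤ x ^ 2 / 2 - 5 / 96 * x ^ 4 := by nlinarith
  have hprod : (1 - x ^ 2 / 2) * (x ^ 2 / 2 - 5 / 96 * x ^ 4) ≤ θ :=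
    calc (1 - x ^ 2 / 2) * (x ^ 2 / 2 - 5 / 96 * x ^ 4) ≤ cos φ * (1 - cos x) :=
          mul_le_mul hc hd hd0 (by linarith)
      _ = sin θ := h
      _ ≤ θ := sin_le hθ
  -- `cos φ ≥ 1/2` and `1 - cos x ≥ x²/4` on `[0, 1]`
  have hcrude : x ^ 2 ≤ 8 * θ := by nlinarith
  have hx4 : x ^ 4 ≤ 64 * θ ^ 2 := by nlinarith
  nlinarith [pow_nonneg (sq_nonneg x) 3]

theorem two_mul_sub_le_add_sq_of_cos_mul_one_sub_cos_add_eq_sin {φ θ : ℝ} (hθ : 0 ≤ θ)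
    (h : cos φ * (1 - cos (φ + θ)) = sin θ) :
    2 * θ - θ ^ 3 / 3 ≤ (φ + θ) ^ 2 := by
  have hd : 1 - cos (φ + θ) ≤ (φ + θ) ^ 2 / 2 := by linarith [one_sub_sq_div_two_le_cos (x := φ + θ)]
  have hcd : cos φ * (1 - cos (φ + θ)) ≤ 1 - cos (φ + θ) :=
    mul_le_of_le_one_left (by linarith [cos_le_one (φ + θ)]) (cos_le_one φ)
  linarith [sin_ge_sub_cube hθ]

theorem stmt_1 : ∃ C > (0:ℝ), ∃ θ₀ > (0:ℝ), ∀ θ : ℝ, θ ∈ Set.Ioo 0 θ₀ →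
    ∀ φ ∈ Set.Ioo (0:ℝ) (Real.pi / 4),
      (1 - Real.tan φ) * Real.cos (φ + θ) = 1 - Real.sin (φ + θ) →
      |φ - Real.sqrt (2 * θ)| ≤ C * θ := by
  refine ⟨41, by norm_num, 1 / 5, by norm_num, ?_⟩
  rintro θ ⟨hθ, hθ₀⟩ φ ⟨hφ, hφπ⟩ h
  have hx : φ + θ ≤ 1 := by linarith [pi_lt_d2]
  have hcos : cos φ ≠ 0 := (cos_pos_of_mem_Ioo ⟨by linarith [pi_pos], by linarith⟩).ne'
  have key := cos_mul_one_sub_cos_add_eq_sin hcos h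
  have hsq : |(φ + θ) ^ 2 - 2 * θ| ≤ 40 * θ ^ 2 := by
    have hup := add_sq_le_of_cos_mul_one_sub_cos_add_eq_sin hφ.le hθ.le hx key
    have hlow := two_mul_sub_le_add_sq_of_cos_mul_one_sub_cos_add_eq_sin hθ.le key
    have hθ3 : θ ^ 3 ≤ θ ^ 2 := pow_le_pow_of_le_one hθ.le (by linarith) (by norm_num)
    rw [abs_le]; constructor <;> linarith
  have hroot := abs_sub_sqrt_two_mul_le (by positivity) hθ (by linarith) (by norm_num) hsq
  calc |φ - √(2 * θ)| = |(φ + θ - √(2 * θ)) - θ| := by ring_nf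
    _ ≤ |φ + θ - √(2 * θ)| + |θ| := abs_sub _ _
    _ ≤ 40 * θ + θ := by rw [abs_of_pos hθ]; linarith
    _ = 41 * θ := by ring
end

section
/- There exist constants C > 0 and θ₀ > 0 such that for all θ ∈ (0, θ₀), if φ satisfies (1 - tan φ)·cos(φ + θ) = 1 - sin(φ + θ) with 0 < φ < π/4, then |θ - φ²/2| ≤ C·φ³. -/
/-!
Put x = (φ + θ) / 2 and u = tan φ. The half-angle formulas turn the equation into
tan x = u / (2 - u), i.e. 2 tan x = u + u² / 2 + O(u³). Since tan y = y + O(y³) on [0, 1],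
both 2x = u + u² / 2 + O(u³) and u = φ + O(φ³), so θ = 2x - φ = φ² / 2 + O(φ³).
-/
open Real

lemma tan_le_self_add_pow_three {y : ℝ} (hy₀ : 0 ≤ y) (hy₁ : y ≤ 1) : tan y ≤ y + y ^ 3 := by
  have hcos : 0 < cos y := cos_pos_of_mem_Ioo ⟨by linarith [pi_pos], by linarith [pi_gt_three]⟩
  rw [tan_eq_sin_div_cos, div_le_iff₀ hcos]
  have hy3 : y ^ 5 ≤ y ^ 3 := pow_le_pow_of_le_one hy₀ hy₁ (by norm_num)
  calc sin y ≤ y := sin_le hy₀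
    _ ≤ (y + y ^ 3) * (1 - y ^ 2 / 2) := by nlinarith
    _ ≤ (y + y ^ 3) * cos y := by gcongr; exact one_sub_sq_div_two_le_cos

lemma tan_half_mul_two_sub_eq {a ψ : ℝ} (h : (1 - a) * cos ψ = 1 - sin ψ)
    (hcos : cos (ψ / 2) ≠ 0) (hne : sin (ψ / 2) ≠ cos (ψ / 2)) :
    tan (ψ / 2) * (2 - a) = a := by
  -- With c, s the cosine and sine of ψ / 2: cos ψ = (c - s)(c + s) and 1 - sin ψ = (c - s)².
  rw [← mul_div_cancel₀ ψ two_ne_zero, cos_two_mul, sin_two_mul] at h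
  have key : sin (ψ / 2) * (2 - a) = a * cos (ψ / 2) := by
    apply mul_left_cancel₀ (sub_ne_zero.mpr hne.symm)
    linear_combination h + (a - 2) * sin_sq_add_cos_sq (ψ / 2)
  rw [tan_eq_sin_div_cos, div_mul_eq_mul_div, key, mul_div_cancel_right₀ _ hcos]

lemma abs_two_mul_sub_le_of_tan_mul_two_sub_eq {u x : ℝ} (hu₁ : u ≤ 1)
    (hx₀ : 0 ≤ x) (hx₁ : x ≤ 1) (h : tan x * (2 - u) = u) :
    |2 * x - (u + u ^ 2 / 2)| ≤ 2 * u ^ 3 := by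
  set t := tan x
  have ht_le : t ≤ x + x ^ 3 := tan_le_self_add_pow_three hx₀ hx₁
  have hx_le : x ≤ t := le_tan hx₀ (by linarith [pi_gt_three])
  have ht_eq : 2 * t = u + u ^ 2 / 2 + u ^ 2 * t / 2 := by linear_combination (1 + u / 2) * h
  have ht_le_u : t ≤ u := by nlinarith
  have : x ^ 3 ≤ t ^ 3 := by gcongr
  have : t ^ 3 ≤ u ^ 3 := by gcongr; linarith
  rw [abs_le]
  constructor <;> nlinarith

lemma abs_sub_add_sq_div_two_le_of_mem_Icc {y u φ : ℝ} (hφ₀ : 0 ≤ φ) (hφ₁ : φ ≤ 1)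
    (hu : u ∈ Set.Icc φ (φ + φ ^ 3)) (hy : |y - (u + u ^ 2 / 2)| ≤ 2 * u ^ 3) :
    |y - (φ + φ ^ 2 / 2)| ≤ 20 * φ ^ 3 := by
  obtain ⟨hφu, huφ⟩ := hu
  have hφ4 : φ ^ 4 ≤ φ ^ 3 := pow_le_pow_of_le_one hφ₀ hφ₁ (by norm_num)
  have hφ6 : φ ^ 6 ≤ φ ^ 3 := pow_le_pow_of_le_one hφ₀ hφ₁ (by norm_num)
  have hu2 : u ^ 2 - φ ^ 2 ≤ 3 * φ ^ 3 := by nlinarith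
  have hu3 : u ^ 3 ≤ 8 * φ ^ 3 := by
    have : u ≤ 2 * φ := by nlinarith
    calc u ^ 3 ≤ (2 * φ) ^ 3 := by gcongr; linarith
      _ = 8 * φ ^ 3 := by ring
  rw [abs_le] at hy ⊢
  constructor <;> nlinarith

theorem stmt_2 : ∃ C > (0:ℝ), ∃ θ₀ > (0:ℝ), ∀ θ : ℝ, θ ∈ Set.Ioo 0 θ₀ →
    ∀ φ : ℝ, 0 < φ → φ < Real.pi / 4 →
      (1 - Real.tan φ) * Real.cos (φ + θ) = 1 - Real.sin (φ + θ) →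
      |θ - φ ^ 2 / 2| ≤ C * φ ^ 3 := by
  refine ⟨20, by norm_num, π / 4, by positivity, ?_⟩
  rintro θ ⟨hθ₀, hθ₁⟩ φ hφ₀ hφ₁ h
  have hπ : π / 4 < 1 := by linarith [pi_lt_four]
  set x := (φ + θ) / 2 with hx
  have hx₀ : 0 < x := by positivity
  have hx₁ : x < π / 4 := by linarith
  have hu_lt : tan φ < 1 := by
    simpa [tan_pi_div_four] using tan_lt_tan_of_nonneg_of_lt_pi_div_two hφ₀.le (by linarith) hφ₁
  have htx : tan x < 1 := by
    simpa [tan_pi_div_four] using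
      tan_lt_tan_of_nonneg_of_lt_pi_div_two hx₀.le (by linarith) hx₁
  have hcos : 0 < cos x := cos_pos_of_mem_Ioo ⟨by linarith [pi_pos], by linarith⟩
  have hsin : sin x ≠ cos x := by
    rw [tan_eq_sin_div_cos, div_lt_one hcos] at htx
    exact htx.ne
  have htan_half := tan_half_mul_two_sub_eq h hcos.ne' hsin
  have h2x := abs_two_mul_sub_le_of_tan_mul_two_sub_eq hu_lt.le hx₀.le (by linarith) htan_half
  have hexp := abs_sub_add_sq_div_two_le_of_mem_Icc hφ₀.le (by linarith)
    ⟨le_tan hφ₀.le (by linarith), tan_le_self_add_pow_three hφ₀.le (by linarith)⟩ h2x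
  convert hexp using 2
  ring
end

section
/- For all sufficiently small θ > 0, letting φ be the solution of (1 - tan φ)·cos(φ + θ) = 1 - sin(φ + θ) in (0, π/4), there exists a unique ψ ∈ (0, π/4) satisfying 1 - tan(ψ + θ) = cos(φ + θ) - (1 - tan φ)·sin(φ + θ). -/
/-!
Eliminating `1 - sin (φ + θ)` with the defining equation of `φ` collapses the right-hand side to
`1 - tan φ`, so the equation for `ψ` reads `tan (ψ + θ) = tan φ` and its only solution is
`ψ = φ - θ`. This lies in `(0, π/4)` because `φ > θ`: to second order the equation for `φ` says
`θ ≈ (φ + θ)² / 2`, so `φ ≈ √(2θ)` is much larger than `θ` when `θ` is small.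
-/

open Real Set

lemma cos_sub_mul_sin_eq_of_mul_cos_eq {t α : ℝ} (hα : cos α ≠ 0)
    (h : t * cos α = 1 - sin α) : cos α - t * sin α = t := by
  refine mul_right_cancel₀ hα ?_
  linear_combination (-(sin α + 1)) * h + sin_sq_add_cos_sq α

lemma lt_of_one_sub_tan_mul_cos_eq {φ θ : ℝ} (hφ : 0 < φ) (hθ : θ ≤ 1 / 4)
    (h : (1 - tan φ) * cos (φ + θ) = 1 - sin (φ + θ)) : θ < φ := by
  by_contra! hφθ
  set α := φ + θ
  have hα₀ : 0 < α := by linarith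
  have hα₁ : α ≤ 1 / 2 := by linarith
  have hπ := pi_gt_three
  have hcos_φ : 0 < cos φ := cos_pos_of_mem_Ioo ⟨by linarith, by linarith⟩
  have hcos_le : cos α ≤ cos φ :=
    cos_le_cos_of_nonneg_of_le_pi hφ.le (by linarith) (by linarith)
  have htan_mul_cos : tan φ * cos α ≤ φ :=
    calc tan φ * cos α = sin φ * (cos α / cos φ) := by rw [tan_eq_sin_div_cos]; ring
      _ ≤ sin φ * 1 := by
        gcongr
        · exact (sin_pos_of_pos_of_lt_pi hφ (by linarith)).le
        · exact div_le_one_of_le₀ hcos_le hcos_φ.le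
      _ ≤ φ := by rw [mul_one]; exact sin_le hφ.le
  have hcos_α := one_sub_sq_div_two_le_cos (x := α)
  have hsin_α := sin_gt_sub_cube hα₀
  -- `α - φ ≤ α² / 2 + α³ / 6`, impossible for small `α` since `φ ≤ α / 2`
  nlinarith [mul_pos hα₀ hα₀]

lemma existsUnique_tan_add_eq {φ θ : ℝ} (hθ : 0 < θ) (hθφ : θ < φ) (hφ : φ < π / 4) :
    ∃! ψ, ψ ∈ Ioo 0 (π / 4) ∧ tan (ψ + θ) = tan φ := by
  refine ⟨φ - θ, ⟨⟨by linarith, by linarith⟩, by rw [sub_add_cancel]⟩, ?_⟩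
  rintro ψ ⟨⟨hψ₀, hψ⟩, htan⟩
  have : ψ + θ = φ :=
    injOn_tan ⟨by linarith, by linarith⟩ ⟨by linarith, by linarith⟩ htan
  linarith

theorem stmt_3 : ∃ θ₀ > (0:ℝ), ∀ θ : ℝ, 0 < θ → θ < θ₀ →
    ∀ φ ∈ Set.Ioo (0:ℝ) (Real.pi / 4),
      (1 - Real.tan φ) * Real.cos (φ + θ) = 1 - Real.sin (φ + θ) →
      ∃! ψ : ℝ, ψ ∈ Set.Ioo (0:ℝ) (Real.pi / 4) ∧
        1 - Real.tan (ψ + θ) =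
          Real.cos (φ + θ) - (1 - Real.tan φ) * Real.sin (φ + θ) := by
  refine ⟨1 / 4, by norm_num, fun θ hθ hθ₀ φ ⟨hφ₀, hφ⟩ h => ?_⟩
  have hcos : cos (φ + θ) ≠ 0 :=
    (cos_pos_of_mem_Ioo ⟨by linarith, by linarith [pi_gt_three]⟩).ne'
  simp only [cos_sub_mul_sin_eq_of_mul_cos_eq hcos h, sub_right_inj]
  exact existsUnique_tan_add_eq hθ (lt_of_one_sub_tan_mul_cos_eq hφ₀ hθ₀.le h) hφ
end

section
/- There exist constants C > 0 and θ₀ > 0 such that for all θ ∈ (0, θ₀): if φ solves (1 - tan φ)·cos(φ + θ) = 1 - sin(φ + θ) and ψ solves 1 - tan(ψ + θ) = cos(φ + θ) - (1 - tan φ)·sin(φ + θ), with φ, ψ ∈ (0, π/4), then |ψ - (φ - θ)| ≤ C·φ³. -/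
theorem stmt_4 : ∃ C > (0:ℝ), ∃ θ₀ > (0:ℝ), ∀ θ : ℝ, θ ∈ Set.Ioo 0 θ₀ →
    ∀ φ ∈ Set.Ioo (0:ℝ) (Real.pi / 4), ∀ ψ ∈ Set.Ioo (0:ℝ) (Real.pi / 4),
      (1 - Real.tan φ) * Real.cos (φ + θ) = 1 - Real.sin (φ + θ) →
      1 - Real.tan (ψ + θ) =
        Real.cos (φ + θ) - (1 - Real.tan φ) * Real.sin (φ + θ) →
      |ψ - (φ - θ)| ≤ C * φ ^ 3 := by
  refine ⟨1, one_pos, Real.pi / 4, by positivity, ?_⟩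
  rintro θ ⟨hθ0, hθ1⟩ φ ⟨hφ0, hφ1⟩ ψ ⟨hψ0, hψ1⟩ h1 h2
  have hpi := Real.pi_pos
  have ha1 : φ + θ < Real.pi / 2 := by linarith
  have ha0 : 0 < φ + θ := by linarith
  have hca : 0 < Real.cos (φ + θ) := Real.cos_pos_of_mem_Ioo ⟨by linarith, ha1⟩
  -- multiply eq2 by cos(φ+θ) and use eq1 plus sin²+cos²=1
  have hsq := Real.sin_sq_add_cos_sq (φ + θ)
  have key : Real.tan (ψ + θ) = Real.tan φ := by
    have h3 : (1 - Real.tan (ψ + θ)) * Real.cos (φ + θ)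
        = (1 - Real.tan φ) * Real.cos (φ + θ) := by
      linear_combination Real.cos (φ + θ) * h2 - (Real.sin (φ + θ) + 1) * h1 + hsq
    have := mul_right_cancel₀ (ne_of_gt hca) h3
    linarith
  have heq : ψ + θ = φ := by
    apply Real.tan_inj_of_lt_of_lt_pi_div_two _ _ (by linarith) (by linarith) key
    · linarith
    · linarith
  have : ψ - (φ - θ) = 0 := by linarith
  rw [this, abs_zero]
  positivity
end

section
/- There exist constants C > 0 and ψ₀ > 0 such that for all ψ ∈ (0, ψ₀), the solution θ' of sec ψ - 1 + tan ψ = tan(ψ + θ') with 0 < ψ + θ' < π/4 satisfies |θ' - ψ²/2| ≤ C·ψ³. -/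
/-!
Clearing denominators in `sec ψ - 1 + tan ψ = tan (ψ + θ')` and using
`sin θ' = sin (ψ + θ') cos ψ - cos (ψ + θ') sin ψ` gives the exact relation
`sin θ' = (1 - cos ψ) cos (ψ + θ')`. Its right-hand side is `ψ² / 2 + O(ψ⁴)` as soon as
`ψ + θ' = O(ψ)`, which Jordan's inequality provides, and `θ' = sin θ' + O(θ'³)`.
-/

open Real

theorem sin_eq_one_sub_cos_mul_cos_of_sec_sub_one_add_tan_eq_tan {ψ θ : ℝ}
    (hψ : cos ψ ≠ 0) (hψθ : cos (ψ + θ) ≠ 0) (h : 1 / cos ψ - 1 + tan ψ = tan (ψ + θ)) :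
    sin θ = (1 - cos ψ) * cos (ψ + θ) := by
  rw [tan_eq_sin_div_cos, tan_eq_sin_div_cos] at h
  field_simp at h
  have hsub : sin θ = sin (ψ + θ) * cos ψ - cos (ψ + θ) * sin ψ := by
    simpa using sin_sub (ψ + θ) ψ
  rw [hsub]
  linear_combination -h

theorem one_sub_cos_le_sq_div_two (x : ℝ) : 1 - cos x ≤ x ^ 2 / 2 := by
  linarith [one_sub_sq_div_two_le_cos (x := x)]

section

variable {ψ θ : ℝ}

theorem pos_of_sin_eq_one_sub_cos_mul_cos (hψ₀ : 0 < ψ) (hψπ : ψ ≤ π) (hψθ₀ : 0 < ψ + θ)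
    (hψθ : ψ + θ < π / 2) (h : sin θ = (1 - cos ψ) * cos (ψ + θ)) : 0 < θ := by
  have hcos : cos ψ < 1 := by
    rw [← cos_zero]
    exact cos_lt_cos_of_nonneg_of_le_pi le_rfl hψπ hψ₀
  have hsin : 0 < sin θ := by
    rw [h]
    exact mul_pos (by linarith) (cos_pos_of_mem_Ioo ⟨by linarith, hψθ⟩)
  by_contra! hθ
  linarith [sin_nonpos_of_nonpos_of_neg_pi_le hθ (by linarith)]

theorem le_pi_div_four_mul_sq_of_sin_eq_one_sub_cos_mul_cos (hψ₀ : 0 < ψ) (hθ : 0 < θ)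
    (hψθ : ψ + θ < π / 2) (h : sin θ = (1 - cos ψ) * cos (ψ + θ)) : θ ≤ π / 4 * ψ ^ 2 := by
  have hsin : sin θ ≤ ψ ^ 2 / 2 :=
    calc sin θ ≤ 1 - cos ψ := by
          rw [h]
          exact mul_le_of_le_one_right (sub_nonneg.2 (cos_le_one ψ)) (cos_le_one _)
      _ ≤ ψ ^ 2 / 2 := one_sub_cos_le_sq_div_two ψ
  have hjordan := mul_le_sin hθ.le (by linarith)
  have hπ := pi_pos
  calc θ = π / 2 * (2 / π * θ) := by field_simp
    _ ≤ π / 4 * ψ ^ 2 := by nlinarith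

theorem abs_sub_sq_div_two_le_of_sin_eq_one_sub_cos_mul_cos (hψ₀ : 0 < ψ) (hψ₁ : ψ ≤ 1)
    (hθ₀ : 0 < θ) (hθ : θ ≤ ψ ^ 2) (h : sin θ = (1 - cos ψ) * cos (ψ + θ)) :
    |θ - ψ ^ 2 / 2| ≤ 2 * ψ ^ 4 := by
  have hψθ : ψ + θ ≤ 2 * ψ := by nlinarith
  have hsin : |θ - sin θ| ≤ ψ ^ 4 / 6 := by
    have hθ₃ : θ ^ 3 ≤ ψ ^ 4 := by
      calc θ ^ 3 ≤ (ψ ^ 2) ^ 3 := by gcongr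
        _ ≤ ψ ^ 4 := by nlinarith [pow_le_one₀ hψ₀.le hψ₁ (n := 2), pow_pos hψ₀ 4]
    exact (abs_sub_sin_le θ).trans (by rw [abs_of_pos hθ₀]; linarith)
  -- `(1 - cos ψ) - sin θ` is the product `(1 - cos ψ) (1 - cos (ψ + θ))` of two `O(ψ²)` factors.
  have hprod : |sin θ - (1 - cos ψ)| ≤ ψ ^ 4 := by
    have h₁ := one_sub_cos_le_sq_div_two ψ
    have h₂ := one_sub_cos_le_sq_div_two (ψ + θ)
    have h₃ : (ψ + θ) ^ 2 ≤ (2 * ψ) ^ 2 := by gcongr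
    have h₄ := sub_nonneg.2 (cos_le_one ψ)
    have h₅ := sub_nonneg.2 (cos_le_one (ψ + θ))
    rw [abs_le, h]
    constructor <;> nlinarith [mul_le_mul h₁ h₂ h₅ (by positivity)]
  have hcos : |cos ψ - (1 - ψ ^ 2 / 2)| ≤ ψ ^ 4 * (5 / 96) := by
    simpa [abs_of_pos hψ₀] using cos_bound (x := ψ) (by rwa [abs_of_pos hψ₀])
  calc |θ - ψ ^ 2 / 2|
      = |(θ - sin θ) + (sin θ - (1 - cos ψ)) - (cos ψ - (1 - ψ ^ 2 / 2))| := by ring_nf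
    _ ≤ |θ - sin θ| + |sin θ - (1 - cos ψ)| + |cos ψ - (1 - ψ ^ 2 / 2)| :=
      (abs_sub _ _).trans (add_le_add_left (abs_add_le _ _) _)
    _ ≤ 2 * ψ ^ 4 := by linarith [pow_pos hψ₀ 4]

end

theorem stmt_6 : ∃ C > (0:ℝ), ∃ ψ₀ > (0:ℝ), ∀ ψ : ℝ, ψ ∈ Set.Ioo 0 ψ₀ →
    ∀ θ' : ℝ, 0 < ψ + θ' → ψ + θ' < Real.pi / 4 →
      1 / Real.cos ψ - 1 + Real.tan ψ = Real.tan (ψ + θ') →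
      |θ' - ψ ^ 2 / 2| ≤ C * ψ ^ 3 := by
  refine ⟨1, one_pos, 1 / 2, by norm_num, ?_⟩
  rintro ψ ⟨hψ₀, hψ₁⟩ θ' hψθ₀ hψθ heq
  have hπ₃ := pi_gt_three
  have hπ₄ := pi_le_four
  have hψθ' : ψ + θ' < π / 2 := by linarith
  have h := sin_eq_one_sub_cos_mul_cos_of_sec_sub_one_add_tan_eq_tan
    (cos_pos_of_mem_Ioo ⟨by linarith, by linarith⟩).ne'
    (cos_pos_of_mem_Ioo ⟨by linarith, hψθ'⟩).ne' heq
  have hθ₀ := pos_of_sin_eq_one_sub_cos_mul_cos hψ₀ (by linarith) hψθ₀ hψθ' h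
  have hθ : θ' ≤ ψ ^ 2 := by
    nlinarith [le_pi_div_four_mul_sq_of_sin_eq_one_sub_cos_mul_cos hψ₀ hθ₀ hψθ' h]
  calc |θ' - ψ ^ 2 / 2| ≤ 2 * ψ ^ 4 :=
        abs_sub_sq_div_two_le_of_sin_eq_one_sub_cos_mul_cos hψ₀ (by linarith) hθ₀ hθ h
    _ ≤ 1 * ψ ^ 3 := by nlinarith [pow_pos hψ₀ 3]
end

section
/- There exist constants C > 0 and θ₀ > 0 such that for all θ ∈ (0, θ₀), defining φ by (1 - tan φ)·cos(φ + θ) = 1 - sin(φ + θ), ψ by 1 - tan(ψ + θ) = cos(φ + θ) - (1 - tan φ)·sin(φ + θ), and θ' by sec ψ - 1 + tan ψ = tan(ψ + θ') (all angles in (0, π/4)), one has 0 ≤ θ - θ' ≤ C·φ³. -/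
/-!
Write `u, v, s` for the tangents of the half angles of `φ, θ, ψ`. The second relation says
`tan (ψ + θ) = tan φ`, i.e. `ψ = φ - θ`; the first says `tan φ * (1 + t) = 2 t` with
`t = tan ((φ + θ) / 2)`, which forces `v (1 - u) = u² (1 + u)`, so `θ ≍ φ²`; the third says
`tan (ψ + θ') * (1 - s) = 2 s`. Eliminating `t`, `v`, `s` leaves
`tan φ - tan (ψ + θ') = 8 u³ / ((1 - u²) (1 - s) (1 + u v) (1 - u))`, which is positive and
`O(φ³)`. Since `tan' ≥ 1`, the angle `θ - θ' = φ - (ψ + θ')` lies between `0` and this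
difference.
-/

open Real Set

lemma tan_add_mul_one_sub_tan_mul {x y : ℝ} (hx : cos x ≠ 0) (hy : cos y ≠ 0)
    (hxy : cos (x + y) ≠ 0) : tan (x + y) * (1 - tan x * tan y) = tan x + tan y := by
  rw [tan_eq_sin_div_cos, tan_eq_sin_div_cos, tan_eq_sin_div_cos]
  field_simp
  rw [sin_add, cos_add]
  ring

lemma tan_sub_mul_one_add_tan_mul {x y : ℝ} (hx : cos x ≠ 0) (hy : cos y ≠ 0)
    (hxy : cos (x - y) ≠ 0) : tan (x - y) * (1 + tan x * tan y) = tan x - tan y := by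
  rw [sub_eq_add_neg] at hxy ⊢
  have h := tan_add_mul_one_sub_tan_mul hx (by rwa [cos_neg]) hxy
  rwa [tan_neg, mul_neg, sub_neg_eq_add, ← sub_eq_add_neg] at h

lemma tan_half_le_self {x : ℝ} (h0 : 0 ≤ x) (h1 : x ≤ 2 * π / 3) : tan (x / 2) ≤ x := by
  have hcos : 1 / 2 ≤ cos (x / 2) := by
    rw [← cos_pi_div_three]
    exact cos_le_cos_of_nonneg_of_le_pi (by linarith) (by linarith [pi_pos]) (by linarith)
  rw [tan_eq_sin_div_cos, div_le_iff₀ (by linarith)]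
  nlinarith [sin_le (x := x / 2) (by linarith)]

lemma sub_le_tan_sub_tan {x y : ℝ} (hx : -(π / 2) < x) (hxy : x ≤ y) (hy : y < π / 2) :
    y - x ≤ tan y - tan x := by
  have hcos : ∀ z ∈ Ioo (-(π / 2)) (π / 2), 0 < cos z := fun z hz => cos_pos_of_mem_Ioo hz
  have hmono : MonotoneOn (fun z => tan z - z) (Ioo (-(π / 2)) (π / 2)) := by
    refine monotoneOn_of_deriv_nonneg (convex_Ioo _ _)
      (continuousOn_tan_Ioo.sub continuousOn_id) (fun z hz => ?_) (fun z hz => ?_)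
    · rw [interior_Ioo] at hz
      exact ((hasDerivAt_tan (hcos z hz).ne').sub (hasDerivAt_id z)).differentiableAt
        |>.differentiableWithinAt
    · rw [interior_Ioo] at hz
      rw [deriv_tan_sub_id z (hcos z hz).ne', sub_nonneg,
        le_one_div one_pos (pow_pos (hcos z hz) 2), div_one]
      exact cos_sq_le_one z
  have := hmono ⟨hx, hxy.trans_lt hy⟩ ⟨hx.trans_le hxy, hy⟩ hxy
  simp only at this
  linarith

lemma tan_mul_one_add_tan_half_of_one_sub_tan_mul_cos_eq {φ a : ℝ}
    (h : (1 - tan φ) * cos a = 1 - sin a) (ha : cos a ≠ -1) (ht : tan (a / 2) ≠ 1) :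
    tan φ * (1 + tan (a / 2)) = 2 * tan (a / 2) := by
  rw [cos_eq_two_mul_tan_half_div_one_sub_tan_half_sq a ha,
    sin_eq_two_mul_tan_half_div_one_add_tan_half_sq a] at h
  set t := tan (a / 2)
  field_simp at h
  apply mul_left_cancel₀ (sub_ne_zero.mpr (Ne.symm ht))
  linear_combination -h

lemma tan_eq_tan_of_one_sub_tan_eq {φ a b : ℝ} (ha : cos a ≠ 0)
    (h₁ : (1 - tan φ) * cos a = 1 - sin a) (h₂ : 1 - tan b = cos a - (1 - tan φ) * sin a) :
    tan b = tan φ := by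
  apply mul_right_cancel₀ ha
  linear_combination (-(cos a)) * h₂ + (1 + sin a) * h₁ - sin_sq_add_cos_sq a

lemma one_div_cos_sub_one_add_tan_mul_one_sub_tan_half {ψ : ℝ} (h0 : cos ψ ≠ 0)
    (h1 : cos ψ ≠ -1) : (1 / cos ψ - 1 + tan ψ) * (1 - tan (ψ / 2)) = 2 * tan (ψ / 2) := by
  have hc := cos_eq_two_mul_tan_half_div_one_sub_tan_half_sq ψ h1
  rw [tan_eq_one_sub_tan_half_sq_div_one_add_tan_half_sq ψ, hc]
  rw [hc] at h0
  set s := tan (ψ / 2)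
  have hs : 1 - s ^ 2 ≠ 0 := by rintro h; simp [h] at h0
  have hs' : 1 + s ^ 2 ≠ 0 := by positivity
  field_simp
  ring

/- `F = tan φ`, `t = tan ((φ + θ) / 2)`, `u, v, s` are the half-angle tangents of `φ, θ, ψ`
with `ψ = φ - θ`, and `B = tan (ψ + θ')`. -/
lemma sub_mul_eq_eight_mul_cube {F B t u v s : ℝ} (hF : F * (1 - u ^ 2) = 2 * u)
    (hFt : F * (1 + t) = 2 * t) (ht : t * (1 - u * v) = u + v) (hs : s * (1 + u * v) = u - v)
    (hB : B * (1 - s) = 2 * s) :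
    (F - B) * ((1 - u ^ 2) * (1 - s) * (1 + u * v) * (1 - u)) = 8 * u ^ 3 := by
  have hT : t * (1 - u - u ^ 2) = u := by
    linear_combination -((1 - u ^ 2) / 2) * hFt + ((1 + t) / 2) * hF
  have hv : v * (1 - u) = u ^ 2 * (1 + u) := by
    linear_combination (1 - u * v) * hT - (1 - u - u ^ 2) * ht
  linear_combination (1 - u) * (1 + u * v) * (1 - s) * hF
    - (1 - u) * (1 + u * v) * (1 - u ^ 2) * hB
    + (1 - u) * (-2 - 2 * u + 2 * u ^ 2) * hs + 2 * (1 + u) * hv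

lemma tan_sub_one_div_cos_sub_one_add_tan_mul_eq {φ θ ψ : ℝ} (hθ : 0 ≤ θ) (hψ : 0 ≤ ψ)
    (hφθ : φ + θ < 1) (hψθ : ψ + θ = φ)
    (h : (1 - tan φ) * cos (φ + θ) = 1 - sin (φ + θ)) :
    (tan φ - (1 / cos ψ - 1 + tan ψ)) * ((1 - tan (φ / 2) ^ 2) * (1 - tan (ψ / 2)) *
      (1 + tan (φ / 2) * tan (θ / 2)) * (1 - tan (φ / 2))) = 8 * tan (φ / 2) ^ 3 := by
  have hπ : 3 < π := pi_gt_three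
  have hcos : ∀ z, 0 ≤ z → z < 1 → 0 < cos z :=
    fun z h0 h1 => cos_pos_of_mem_Ioo ⟨by linarith, by linarith⟩
  have hF : tan φ * (1 - tan (φ / 2) ^ 2) = 2 * tan (φ / 2) := by
    rw [tan_eq_one_sub_tan_half_sq_div_one_add_tan_half_sq φ]
    refine div_mul_cancel₀ _ (sub_ne_zero.mpr (Ne.symm ?_))
    nlinarith [tan_half_le_self (x := φ) (by linarith) (by linarith),
      tan_nonneg_of_nonneg_of_le_pi_div_two (x := φ / 2) (by linarith) (by linarith)]
  have hFt := tan_mul_one_add_tan_half_of_one_sub_tan_mul_cos_eq h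
    (by linarith [hcos (φ + θ) (by linarith) hφθ])
    ((tan_half_le_self (x := φ + θ) (by linarith) (by linarith)).trans_lt hφθ).ne
  have ht : tan ((φ + θ) / 2) * (1 - tan (φ / 2) * tan (θ / 2)) =
      tan (φ / 2) + tan (θ / 2) := by
    rw [add_div]
    exact tan_add_mul_one_sub_tan_mul (hcos _ (by linarith) (by linarith)).ne'
      (hcos _ (by linarith) (by linarith)).ne' (hcos _ (by linarith) (by linarith)).ne'
  have hs : tan (ψ / 2) * (1 + tan (φ / 2) * tan (θ / 2)) = tan (φ / 2) - tan (θ / 2) := by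
    rw [show ψ / 2 = φ / 2 - θ / 2 by linarith]
    exact tan_sub_mul_one_add_tan_mul (hcos _ (by linarith) (by linarith)).ne'
      (hcos _ (by linarith) (by linarith)).ne' (hcos _ (by linarith) (by linarith)).ne'
  have hB := one_div_cos_sub_one_add_tan_mul_one_sub_tan_half
    (hcos ψ hψ (by linarith)).ne' (by linarith [hcos ψ hψ (by linarith)])
  exact sub_mul_eq_eight_mul_cube hF hFt ht hs hB

lemma pos_and_le_of_mul_eq_cube {d u v s : ℝ} (hu0 : 0 < u) (hu : u < 4 / 5) (hs : s < 4 / 5)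
    (hv : 0 ≤ v) (h : d * ((1 - u ^ 2) * (1 - s) * (1 + u * v) * (1 - u)) = 8 * u ^ 3) :
    0 < d ∧ d ≤ 1000 * u ^ 3 := by
  set M := (1 - u ^ 2) * (1 - s) * (1 + u * v) * (1 - u)
  have hM : 1 / 125 ≤ M := by
    have h₁ : 9 / 25 ≤ 1 - u ^ 2 := by nlinarith
    have h₂ : 1 ≤ 1 + u * v := le_add_of_nonneg_right (mul_nonneg hu0.le hv)
    have h₃ : 9 / 125 ≤ (1 - u ^ 2) * (1 - s) := by nlinarith
    have h₄ : 9 / 125 ≤ (1 - u ^ 2) * (1 - s) * (1 + u * v) := by nlinarith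
    nlinarith
  have hd : d = 8 * u ^ 3 / M := by rw [← h]; field_simp
  refine ⟨by rw [hd]; positivity, ?_⟩
  rw [hd, div_le_iff₀ (by linarith)]
  nlinarith [pow_pos hu0 3]

theorem stmt_7 : ∃ C > (0:ℝ), ∃ θ₀ > (0:ℝ), ∀ θ : ℝ, θ ∈ Set.Ioo 0 θ₀ →
    ∀ φ ∈ Set.Ioo (0:ℝ) (Real.pi / 4), ∀ ψ ∈ Set.Ioo (0:ℝ) (Real.pi / 4),
      ∀ θ' ∈ Set.Ioo (0:ℝ) (Real.pi / 4),
      (1 - Real.tan φ) * Real.cos (φ + θ) = 1 - Real.sin (φ + θ) →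
      1 - Real.tan (ψ + θ) =
        Real.cos (φ + θ) - (1 - Real.tan φ) * Real.sin (φ + θ) →
      1 / Real.cos ψ - 1 + Real.tan ψ = Real.tan (ψ + θ') →
      0 ≤ θ - θ' ∧ θ - θ' ≤ C * φ ^ 3 := by
  refine ⟨1000, by norm_num, 1 / 10, by norm_num, ?_⟩
  rintro θ ⟨hθ0, hθ⟩ φ ⟨hφ0, hφ⟩ ψ ⟨hψ0, hψ⟩ θ' ⟨hθ'0, hθ'⟩ h₁ h₂ h₃
  have hπ : 3 < π := pi_gt_three
  have hπ' : π < 3.15 := pi_lt_d2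
  have hψθ : ψ + θ = φ := injOn_tan ⟨by linarith, by linarith⟩ ⟨by linarith, by linarith⟩ <|
    tan_eq_tan_of_one_sub_tan_eq (cos_pos_of_mem_Ioo ⟨by linarith, by linarith⟩).ne' h₁ h₂
  have key :=
    tan_sub_one_div_cos_sub_one_add_tan_mul_eq hθ0.le hψ0.le (by linarith) hψθ h₁
  rw [h₃] at key
  have hu0 : 0 < tan (φ / 2) := tan_pos_of_pos_of_lt_pi_div_two (by linarith) (by linarith)
  have hu : tan (φ / 2) ≤ φ := tan_half_le_self hφ0.le (by linarith)
  obtain ⟨hpos, hle⟩ := pos_and_le_of_mul_eq_cube hu0 (by linarith)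
    ((tan_half_le_self hψ0.le (by linarith)).trans_lt (by linarith))
    (tan_nonneg_of_nonneg_of_le_pi_div_two (by linarith) (by linarith)) key
  have hlt : ψ + θ' < φ := (strictMonoOn_tan.lt_iff_lt ⟨by linarith, by linarith⟩
    ⟨by linarith, by linarith⟩).mp (sub_pos.mp hpos)
  refine ⟨by linarith, ?_⟩
  calc θ - θ' = φ - (ψ + θ') := by linarith
    _ ≤ tan φ - tan (ψ + θ') := sub_le_tan_sub_tan (by linarith) hlt.le (by linarith)
    _ ≤ 1000 * tan (φ / 2) ^ 3 := hle
    _ ≤ 1000 * φ ^ 3 := by gcongr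
end

section
/- There exist constants C > 0 and θ₀ > 0 such that for all θ ∈ (0, θ₀), with φ, ψ, θ' defined by the equations (1 - tan φ)·cos(φ + θ) = 1 - sin(φ + θ), 1 - tan(ψ + θ) = cos(φ + θ) - (1 - tan φ)·sin(φ + θ), and sec ψ - 1 + tan ψ = tan(ψ + θ'), and setting φ' = ψ + θ', one has |φ - φ'| ≤ C·φ³. -/
private lemma cp_half {sp cp : ℝ} (hsp : 0 < sp) (hcp : 0 < cp) (h : sp < cp)
    (hp : sp ^ 2 + cp ^ 2 = 1) : (1:ℝ) / 2 ≤ cp := by nlinarith [mul_pos hsp hcp]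

private lemma den_quarter {sp cp : ℝ} (hcp : (1:ℝ) / 2 ≤ cp) (hq : cp * sp ≤ 1 / 2) :
    (1:ℝ) / 4 ≤ cp * (1 - cp * sp) := by nlinarith

private lemma div_bound {sp X : ℝ} (hsp : 0 < sp) (hX : (1:ℝ) / 4 ≤ X) :
    sp ^ 3 / X ≤ 4 * sp ^ 3 := by
  rw [div_le_iff₀ (by linarith)]
  nlinarith [pow_pos hsp 3]

private lemma arctan_sub_le_sub {a b : ℝ} (hab : b ≤ a) :
    Real.arctan a - Real.arctan b ≤ a - b := by
  have hmono : Monotone (fun x : ℝ => x - Real.arctan x) := by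
    apply monotone_of_deriv_nonneg
    · exact differentiable_id.sub Real.differentiable_arctan
    · intro x
      have hd : HasDerivAt (fun x : ℝ => x - Real.arctan x) (1 - 1 / (1 + x ^ 2)) x :=
        (hasDerivAt_id x).sub (Real.hasDerivAt_arctan x)
      rw [hd.deriv]
      have h1 : (0:ℝ) < 1 + x ^ 2 := by positivity
      rw [sub_nonneg, div_le_one h1]
      nlinarith [sq_nonneg x]
  have h2 : b - Real.arctan b ≤ a - Real.arctan a := hmono hab
  linarith

set_option maxHeartbeats 1000000 in
theorem stmt_8 : ∃ C > (0:ℝ), ∃ θ₀ > (0:ℝ), ∀ θ : ℝ, θ ∈ Set.Ioo 0 θ₀ →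
    ∀ φ ∈ Set.Ioo (0:ℝ) (Real.pi / 4), ∀ ψ ∈ Set.Ioo (0:ℝ) (Real.pi / 4),
      ∀ θ' ∈ Set.Ioo (0:ℝ) (Real.pi / 4),
      (1 - Real.tan φ) * Real.cos (φ + θ) = 1 - Real.sin (φ + θ) →
      1 - Real.tan (ψ + θ) =
        Real.cos (φ + θ) - (1 - Real.tan φ) * Real.sin (φ + θ) →
      1 / Real.cos ψ - 1 + Real.tan ψ = Real.tan (ψ + θ') →
      |φ - (ψ + θ')| ≤ C * φ ^ 3 := by
  have hpi : (0:ℝ) < Real.pi := Real.pi_pos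
  refine ⟨4, by norm_num, Real.pi / 4, by positivity, ?_⟩
  rintro θ ⟨hθ0, hθ1⟩ φ ⟨hφ0, hφ1⟩ ψ ⟨hψ0, hψ1⟩ θ' ⟨hθ'0, hθ'1⟩ h1 h2 h3
  set cp := Real.cos φ with hcp_def
  set sp := Real.sin φ with hsp_def
  set c := Real.cos (φ + θ) with hc_def
  set s := Real.sin (φ + θ) with hs_def
  have hcp : 0 < cp := Real.cos_pos_of_mem_Ioo ⟨by linarith, by linarith⟩
  have hsp : 0 < sp := Real.sin_pos_of_pos_of_lt_pi hφ0 (by linarith)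
  have hpyth : sp ^ 2 + cp ^ 2 = 1 := Real.sin_sq_add_cos_sq φ
  have hspcp : sp < cp := by
    have h := Real.sin_lt_sin_of_lt_of_le_pi_div_two (x := φ) (y := Real.pi / 2 - φ)
      (by linarith) (by linarith) (by linarith)
    rwa [Real.sin_pi_div_two_sub] at h
  have htanφ : Real.tan φ = sp / cp := Real.tan_eq_sin_div_cos φ
  have hc0 : 0 < c := Real.cos_pos_of_mem_Ioo ⟨by linarith, by linarith⟩
  have hs2 : s ^ 2 + c ^ 2 = 1 := Real.sin_sq_add_cos_sq (φ + θ)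
  -- normalize h1
  have h1' : (cp - sp) * c = cp * (1 - s) := by
    rw [htanφ] at h1
    field_simp at h1
    linarith
  set E := cp ^ 2 + (cp - sp) ^ 2 with hE_def
  have hE : 0 < E := by positivity
  have hc' : E * c = 2 * cp * (cp - sp) := by
    have key : c * (E * c - 2 * cp * (cp - sp)) = 0 := by
      linear_combination ((cp - sp) * c + cp * (1 - s) - 2 * cp) * h1' + cp ^ 2 * hs2
    have := mul_eq_zero.mp key
    rcases this with h | h
    · exact absurd h hc0.ne'
    · linarith
  have hs' : E * s = sp * (2 * cp - sp) := by
    have key : cp * (E * s) = cp * (sp * (2 * cp - sp)) := by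
      linear_combination E * h1' - (cp - sp) * hc'
    exact mul_left_cancel₀ hcp.ne' key
  -- Step: ψ + θ = φ
  have htaneq : Real.tan (ψ + θ) = Real.tan φ := by
    have hrhs : c - (1 - Real.tan φ) * s = 1 - sp / cp := by
      rw [htanφ]
      have hkey : cp * c - (cp - sp) * s = cp - sp := by
        have hk2 : E * (cp * c - (cp - sp) * s) = E * (cp - sp) := by
          linear_combination cp * hc' - (cp - sp) * hs'
        exact mul_left_cancel₀ hE.ne' hk2
      field_simp
      linear_combination hkey
    rw [hrhs] at h2
    have h2' : Real.tan (ψ + θ) = sp / cp := by linarith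
    rw [h2', htanφ]
  have hψθφ : ψ + θ = φ := by
    have h := congrArg Real.arctan htaneq
    rwa [Real.arctan_tan (by linarith) (by linarith),
      Real.arctan_tan (by linarith) (by linarith)] at h
  -- cos ψ and sin ψ
  have hψeq : ψ = 2 * φ - (φ + θ) := by linarith
  have hcosψ : E * Real.cos ψ = 2 * cp ^ 2 * (1 - cp * sp) := by
    rw [hψeq, Real.cos_sub, Real.cos_two_mul, Real.sin_two_mul, ← hcp_def, ← hsp_def,
      ← hc_def, ← hs_def]
    have expand : E * ((2 * cp ^ 2 - 1) * c + 2 * sp * cp * s)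
        = (2 * cp ^ 2 - 1) * (E * c) + 2 * sp * cp * (E * s) := by ring
    rw [expand, hc', hs']
    linear_combination (4 * cp ^ 2 - 2 * cp * sp) * hpyth
  have hsinψ : E * Real.sin ψ = sp * (cp - sp) * (1 + cp ^ 2 - cp * sp) := by
    rw [hψeq, Real.sin_sub, Real.cos_two_mul, Real.sin_two_mul, ← hcp_def, ← hsp_def,
      ← hc_def, ← hs_def]
    have expand : E * (2 * sp * cp * c - (2 * cp ^ 2 - 1) * s)
        = 2 * sp * cp * (E * c) - (2 * cp ^ 2 - 1) * (E * s) := by ring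
    rw [expand, hc', hs']
    linear_combination (- sp * cp) * hpyth
  have hcosψ0 : 0 < Real.cos ψ := Real.cos_pos_of_mem_Ioo ⟨by linarith, by linarith⟩
  have hQ : cp * sp ≤ 1 / 2 := by
    have h := Real.sin_le_one (2 * φ)
    rw [Real.sin_two_mul, ← hcp_def, ← hsp_def] at h
    linarith
  have hQ0 : (0:ℝ) < 1 - cp * sp := by linarith
  -- tan(ψ + θ') = g
  set g : ℝ := sp * (cp - sp) / (1 - cp * sp) with hg_def
  have htang : Real.tan (ψ + θ') = g := by
    have hkey : (1 - Real.cos ψ + Real.sin ψ) * (1 - cp * sp) = sp * (cp - sp) * Real.cos ψ := by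
      have hk2 : E * ((1 - Real.cos ψ + Real.sin ψ) * (1 - cp * sp))
          = E * (sp * (cp - sp) * Real.cos ψ) := by
        linear_combination (-(1 - cp * sp) - sp * (cp - sp)) * hcosψ + (1 - cp * sp) * hsinψ +
          (1 - cp * sp) * cp * sp * hpyth
      exact mul_left_cancel₀ hE.ne' hk2
    have lhs_eq : 1 / Real.cos ψ - 1 + Real.sin ψ / Real.cos ψ
        = (1 - Real.cos ψ + Real.sin ψ) / Real.cos ψ := by
      field_simp
    rw [← h3, Real.tan_eq_sin_div_cos, lhs_eq, hg_def,
      div_eq_div_iff hcosψ0.ne' hQ0.ne']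
    linear_combination hkey
  -- arctan representations
  have hφarc : φ = Real.arctan (sp / cp) := by
    rw [← htanφ, Real.arctan_tan (by linarith) (by linarith)]
  have hφ'arc : ψ + θ' = Real.arctan g := by
    rw [← htang, Real.arctan_tan (by linarith) (by linarith)]
  -- bounds on g
  have hgle : g ≤ sp / cp := by
    have hid : sp * (cp - sp) * cp + sp ^ 3 = sp * (1 - cp * sp) := by
      linear_combination sp * hpyth
    rw [hg_def, div_le_div_iff₀ hQ0 hcp]
    linarith [pow_pos hsp 3]
  have hdiff : sp / cp - g = sp ^ 3 / (cp * (1 - cp * sp)) := by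
    have h9 : sp * (1 - cp * sp) - cp * (sp * (cp - sp)) = sp ^ 3 := by
      linear_combination (-sp) * hpyth
    rw [hg_def, div_sub_div _ _ hcp.ne' hQ0.ne', h9]
  have hcphalf : (1:ℝ) / 2 ≤ cp := cp_half hsp hcp hspcp hpyth
  have hden : (1:ℝ) / 4 ≤ cp * (1 - cp * sp) := den_quarter hcphalf hQ
  have hsple : sp ≤ φ := Real.sin_le hφ0.le
  -- conclude
  have hnonneg : 0 ≤ φ - (ψ + θ') := by
    rw [hφarc, hφ'arc, sub_nonneg]
    exact Real.arctan_strictMono.monotone hgle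
  rw [abs_of_nonneg hnonneg]
  have hb1 : Real.arctan (sp / cp) - Real.arctan g ≤ sp / cp - g := arctan_sub_le_sub hgle
  rw [← hφarc, ← hφ'arc] at hb1
  have hb2 : sp ^ 3 / (cp * (1 - cp * sp)) ≤ 4 * sp ^ 3 := div_bound hsp hden
  have hb3 : sp ^ 3 ≤ φ ^ 3 := by
    apply pow_le_pow_left₀ hsp.le hsple
  linarith [hdiff]
end

section
/- For every real x ≥ 2 and every integer n with 1 < n - h, where h ∈ [1, x] and θ ∈ (0, π/2) satisfies sec θ = (n + tan θ)/h, if additionally n - h ≤ 2 then there exist constants c₁, c₂ > 0 (independent of x, h, n) such that c₁/√h ≤ θ ≤ c₂/√h. -/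
set_option maxHeartbeats 1000000 in
theorem stmt_9 : ∃ c₁ > (0:ℝ), ∃ c₂ > (0:ℝ), ∀ x : ℝ, 2 ≤ x →
    ∀ h : ℝ, h ∈ Set.Icc 1 x → ∀ n : ℤ, 1 < (n : ℝ) - h → (n : ℝ) - h ≤ 2 →
    ∀ θ : ℝ, θ ∈ Set.Ioo 0 (Real.pi / 2) →
      1 / Real.cos θ = ((n : ℝ) + Real.tan θ) / h →
      c₁ / Real.sqrt h ≤ θ ∧ θ ≤ c₂ / Real.sqrt h := by
  refine ⟨3/4, by norm_num, 4, by norm_num, ?_⟩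
  intro x hx h hh n hn1 hn2 θ hθ heq
  obtain ⟨hθ0, hθπ⟩ := hθ
  obtain ⟨hh1, hhx⟩ := hh
  have hpi' : Real.pi < 3.15 := Real.pi_lt_d2
  have hpi3 : 3 < Real.pi := by linarith [Real.pi_gt_three]
  have hh0 : (0:ℝ) < h := by linarith
  have hc : 0 < Real.cos θ := Real.cos_pos_of_mem_Ioo ⟨by linarith, hθπ⟩
  have hc1 : Real.cos θ ≤ 1 := Real.cos_le_one θ
  have hs0 : 0 < Real.sin θ := Real.sin_pos_of_pos_of_lt_pi hθ0 (by linarith)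
  have hs1 : Real.sin θ ≤ 1 := Real.sin_le_one θ
  -- h = n cos θ + sin θ
  have h1 : h = (n : ℝ) * Real.cos θ + Real.sin θ := by
    rw [Real.tan_eq_sin_div_cos] at heq
    field_simp at heq
    nlinarith [heq]
  clear heq
  have key : h * (1 - Real.cos θ) = ((n:ℝ) - h) * Real.cos θ + Real.sin θ := by
    nlinarith [h1]
  clear h1
  -- sin(θ/2)^2 = (1 - cos θ)/2
  have hs2 : Real.sin (θ/2)^2 = (1 - Real.cos θ)/2 := by
    have h2 := Real.cos_sq (θ/2)
    have h3 := Real.sin_sq_add_cos_sq (θ/2)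
    rw [show 2*(θ/2) = θ by ring] at h2
    linarith
  have hsh0 : 0 ≤ Real.sin (θ/2) :=
    Real.sin_nonneg_of_nonneg_of_le_pi (by linarith) (by linarith)
  -- upper bound on 1 - cos θ
  have ub1 : 1 - Real.cos θ ≤ θ^2/2 := by
    have := Real.sin_le (x := θ/2) (by linarith)
    nlinarith
  -- lower bound on 1 - cos θ : 2θ² ≤ π²(1-cosθ)
  have hA : θ ≤ Real.pi * Real.sin (θ/2) := by
    have h4 := Real.mul_le_sin (x := θ/2) (by linarith) (by linarith)
    have h5 : Real.pi * (2/Real.pi*(θ/2)) = θ := by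
      field_simp
    have h6 := mul_le_mul_of_nonneg_left h4 Real.pi_pos.le
    linarith [h5 ▸ h6]
  have hs2' : Real.pi^2 * Real.sin (θ/2)^2 = Real.pi^2 * ((1 - Real.cos θ)/2) := by
    rw [hs2]
  have lb1' : 2*θ^2 ≤ Real.pi^2 * (1 - Real.cos θ) := by
    have hm := mul_self_le_mul_self hθ0.le hA
    nlinarith [hm, hs2']
  have hsq : 0 < Real.sqrt h := Real.sqrt_pos.2 hh0
  have hsqsq : Real.sqrt h ^ 2 = h := Real.sq_sqrt hh0.le
  have hsq1 : 1 ≤ Real.sqrt h := by nlinarith [hsq]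
  have ha2 : (θ * Real.sqrt h)^2 = h * θ^2 := by
    rw [mul_pow, hsqsq]; ring
  constructor
  · -- lower bound
    rw [div_le_iff₀ hsq]
    by_cases hcase : θ ≤ Real.pi/4
    · have hcos4 : Real.sqrt 2 / 2 ≤ Real.cos θ := by
        rw [← Real.cos_pi_div_four]
        exact Real.cos_le_cos_of_nonneg_of_le_pi hθ0.le (by linarith) hcase
      have hsqrt2 : (1:ℝ) ≤ Real.sqrt 2 := by
        nlinarith [Real.sq_sqrt (by norm_num : (0:ℝ) ≤ 2), Real.sqrt_nonneg 2]
      have hcos : (1:ℝ)/2 ≤ Real.cos θ := by linarith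
      have e1 : h * (1 - Real.cos θ) ≤ h * (θ^2/2) :=
        mul_le_mul_of_nonneg_left ub1 hh0.le
      have e2 : 1 * Real.cos θ ≤ ((n:ℝ) - h) * Real.cos θ :=
        mul_le_mul_of_nonneg_right hn1.le hc.le
      have hkey2 : 1 ≤ h * θ^2 := by nlinarith [key, e1, e2, hcos, hs0]
      nlinarith [ha2, hkey2, mul_nonneg hθ0.le hsq.le]
    · push_neg at hcase
      nlinarith [mul_le_mul_of_nonneg_left hsq1 hθ0.le, hcase, hpi3]
  · -- upper bound
    rw [le_div_iff₀ hsq]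
    have e3 : h * (2*θ^2) ≤ h * (Real.pi^2 * (1 - Real.cos θ)) :=
      mul_le_mul_of_nonneg_left lb1' hh0.le
    have e5 : h * (1 - Real.cos θ) ≤ 3 := by
      nlinarith [key, hs1, mul_le_mul hn2 hc1 hc.le (by norm_num : (0:ℝ) ≤ 2)]
    have e6 := mul_le_mul_of_nonneg_left e5 (pow_nonneg Real.pi_pos.le 2)
    have hpisq : Real.pi^2 ≤ 10 := by nlinarith [Real.pi_pos]
    have hkey3 : h * θ^2 ≤ 16 := by nlinarith [e3, e6, hpisq]
    nlinarith [ha2, hkey3, mul_nonneg hθ0.le hsq.le, sq_nonneg (θ * Real.sqrt h - 4)]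
end

section
/- Let θ ∈ (0, π/2) and h > 1 satisfy sec θ = (n + tan θ)/h for some integer n with 1 < n - h ≤ 2. Then there is an absolute constant C such that for h ≥ C, θ² = 2(n - h)/h + E where |E| ≤ C(θ/h + θ⁴). -/
set_option maxHeartbeats 1000000 in
theorem stmt_10 : ∃ C : ℝ, ∀ θ : ℝ, θ ∈ Set.Ioo 0 (Real.pi / 2) →
    ∀ h : ℝ, 1 < h → ∀ n : ℤ, 1 < (n : ℝ) - h → (n : ℝ) - h ≤ 2 →
      1 / Real.cos θ = ((n : ℝ) + Real.tan θ) / h → C ≤ h →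
      ∃ E : ℝ, θ ^ 2 = 2 * ((n : ℝ) - h) / h + E ∧
        |E| ≤ C * (θ / h + θ ^ 4) := by
  refine ⟨300, ?_⟩
  intro θ hθ h hh n hn1 hn2 heq hC
  obtain ⟨hθ0, hθπ⟩ := hθ
  have hcos : 0 < Real.cos θ := Real.cos_pos_of_mem_Ioo ⟨by linarith [Real.pi_pos], hθπ⟩
  have hsin : 0 < Real.sin θ := Real.sin_pos_of_pos_of_lt_pi hθ0 (by linarith [Real.pi_pos])
  have hsinle : Real.sin θ ≤ θ := Real.sin_le hθ0.le
  have hsin1 : Real.sin θ ≤ 1 := Real.sin_le_one θ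
  have hcos1 : Real.cos θ ≤ 1 := Real.cos_le_one θ
  have hpyth : Real.sin θ ^ 2 + Real.cos θ ^ 2 = 1 := Real.sin_sq_add_cos_sq θ
  have htan : Real.tan θ = Real.sin θ / Real.cos θ := Real.tan_eq_sin_div_cos θ
  have hh0 : (0:ℝ) < h := by linarith
  -- key identity: (n - h) * cos θ = h * (1 - cos θ) - sin θ
  have hkey : ((n:ℝ) - h) * Real.cos θ = h * (1 - Real.cos θ) - Real.sin θ := by
    rw [htan] at heq
    field_simp at heq
    linarith
  -- cos θ ≥ 99/100
  have hcosbig : (99:ℝ)/100 ≤ Real.cos θ := by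
    have h1 : h * (1 - Real.cos θ) ≤ 3 := by nlinarith
    nlinarith
  -- sin θ ≤ 1/7
  have hsinsmall : Real.sin θ ≤ 1/7 := by nlinarith
  -- θ ≤ 1/6
  have hθtan : θ < Real.tan θ := Real.lt_tan hθ0 hθπ
  have hθsmall : θ ≤ 1/6 := by
    rw [htan, lt_div_iff₀ hcos] at hθtan
    nlinarith
  -- cos bound
  have habs : |θ| ≤ 1 := by rw [abs_of_pos hθ0]; linarith
  have hr := Real.cos_bound habs
  rw [abs_of_pos hθ0] at hr
  set r := Real.cos θ - (1 - θ ^ 2 / 2) with hrdef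
  clear_value r
  have hr4 : |r| ≤ θ ^ 4 := le_trans hr (by nlinarith [pow_pos hθ0 4])
  rw [abs_le] at hr4
  refine ⟨θ ^ 2 - 2 * ((n:ℝ) - h) / h, by ring, ?_⟩
  set E := θ ^ 2 - 2 * ((n:ℝ) - h) / h with hE
  clear_value E
  have hEkey : E * (h * Real.cos θ) = h * (θ ^ 2 * Real.cos θ - 2 * (1 - Real.cos θ)) + 2 * Real.sin θ := by
    have hEh : E * h = θ ^ 2 * h - 2 * ((n:ℝ) - h) := by
      rw [hE]; field_simp
    have h2 : E * (h * Real.cos θ) = (E * h) * Real.cos θ := by ring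
    rw [h2, hEh]
    linear_combination (-2 : ℝ) * hkey
  obtain ⟨hrl, hru⟩ := hr4
  have hθ2 : θ ^ 2 ≤ 1/36 := by nlinarith
  have hθ4 : (0:ℝ) ≤ θ ^ 4 := by positivity
  have hA : |θ ^ 2 * Real.cos θ - 2 * (1 - Real.cos θ)| ≤ 3 * θ ^ 4 := by
    rw [abs_le]
    have hc : Real.cos θ = 1 - θ ^ 2 / 2 + r := by rw [hrdef]; ring
    have hp1 : (0:ℝ) ≤ (θ ^ 2 + 2) * (r + θ ^ 4) :=
      mul_nonneg (by positivity) (by linarith)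
    have hp2 : (0:ℝ) ≤ (θ ^ 2 + 2) * (θ ^ 4 - r) :=
      mul_nonneg (by positivity) (by linarith)
    have hq : (0:ℝ) ≤ (1/36 - θ ^ 2) * θ ^ 4 := mul_nonneg (by linarith) hθ4
    rw [hc]
    constructor <;> linarith [hp1, hp2, hq, hθ4]
  have hE1 : |E| * (h * Real.cos θ) ≤ 3 * h * θ ^ 4 + 2 * θ := by
    have h1 : |E * (h * Real.cos θ)| = |E| * (h * Real.cos θ) := by
      rw [abs_mul, abs_of_pos (by positivity : (0:ℝ) < h * Real.cos θ)]
    rw [← h1, hEkey]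
    calc |h * (θ ^ 2 * Real.cos θ - 2 * (1 - Real.cos θ)) + 2 * Real.sin θ|
        ≤ |h * (θ ^ 2 * Real.cos θ - 2 * (1 - Real.cos θ))| + |2 * Real.sin θ| := abs_add_le _ _
      _ ≤ 3 * h * θ ^ 4 + 2 * θ := by
          rw [abs_mul, abs_mul, abs_of_pos hh0, abs_of_pos hsin, abs_of_pos (by norm_num : (0:ℝ) < 2)]
          have hm := mul_le_mul_of_nonneg_left hA hh0.le
          linarith [hm, hsinle]
  have h2 : 3 * h * θ ^ 4 + 2 * θ ≤ (300 * (θ / h + θ ^ 4)) * (h * Real.cos θ) := by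
    have hdiv : θ / h * h = θ := div_mul_cancel₀ θ (ne_of_gt hh0)
    have : (300 * (θ / h + θ ^ 4)) * (h * Real.cos θ) = 300 * θ * Real.cos θ + 300 * θ ^ 4 * h * Real.cos θ := by
      linear_combination (300 * Real.cos θ) * hdiv
    rw [this]
    have hm1 : 3 * h * θ ^ 4 ≤ 300 * θ ^ 4 * h * Real.cos θ := by
      have : (3:ℝ) ≤ 300 * Real.cos θ := by linarith
      calc 3 * h * θ ^ 4 = 3 * (h * θ ^ 4) := by ring
        _ ≤ (300 * Real.cos θ) * (h * θ ^ 4) :=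
            mul_le_mul_of_nonneg_right this (by positivity)
        _ = 300 * θ ^ 4 * h * Real.cos θ := by ring
    have hm2 : 2 * θ ≤ 300 * θ * Real.cos θ := by
      have : (2:ℝ) ≤ 300 * Real.cos θ := by linarith
      calc 2 * θ ≤ (300 * Real.cos θ) * θ := mul_le_mul_of_nonneg_right this hθ0.le
        _ = 300 * θ * Real.cos θ := by ring
    linarith
  have := le_trans hE1 h2
  exact le_of_mul_le_mul_right this (by positivity)
end

section
/- For all sufficiently small φ > 0 and any θ with φ²/4 ≤ θ ≤ φ², one has (cos(θ + φ - θ))/(cos(θ + φ)) = 1 + θφ + O(φ⁴); more precisely, there is an absolute constant C with |cos(θ + ψ)/cos(θ + φ) - 1 - θφ| ≤ C·φ⁴ whenever ψ = φ - θ + r, |r| ≤ φ³, and 0 < φ ≤ 1/10. -/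
set_option maxHeartbeats 1000000


theorem stmt_14 : ∃ C : ℝ, ∀ φ θ ψ r : ℝ,
    0 < φ → φ ≤ 1 / 10 → φ ^ 2 / 4 ≤ θ → θ ≤ φ ^ 2 →
    ψ = φ - θ + r → |r| ≤ φ ^ 3 →
    |Real.cos (θ + ψ) / Real.cos (θ + φ) - 1 - θ * φ| ≤ C * φ ^ 4 := by
  use 10
  intro φ θ ψ r hφ hφ1 hθ1 hθ2 hψ hr
  have hθ0 : 0 ≤ θ := le_trans (by positivity) hθ1
  obtain ⟨hr1, hr2⟩ := abs_le.mp hr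
  have ha : θ + ψ = φ + r := by rw [hψ]; ring
  rw [ha]
  set a := φ + r with hadef
  set b := θ + φ with hbdef
  clear_value a b
  have hφ3 : φ ^ 3 ≤ φ := by nlinarith
  have haa : |a| ≤ 11/10 * φ := by rw [abs_le]; constructor <;> nlinarith
  have hba : |b| ≤ 11/10 * φ := by rw [abs_le]; constructor <;> nlinarith
  have haabs : |a| ≤ 1 := by nlinarith
  have hbabs : |b| ≤ 1 := by nlinarith
  have ha4 : |a| ^ 4 ≤ 2 * φ ^ 4 := by
    calc |a| ^ 4 ≤ (11/10 * φ) ^ 4 := pow_le_pow_left₀ (abs_nonneg _) haa 4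
      _ ≤ 2 * φ ^ 4 := by nlinarith
  have hb4 : |b| ^ 4 ≤ 2 * φ ^ 4 := by
    calc |b| ^ 4 ≤ (11/10 * φ) ^ 4 := pow_le_pow_left₀ (abs_nonneg _) hba 4
      _ ≤ 2 * φ ^ 4 := by nlinarith
  have hE1 : |Real.cos a - (1 - a ^ 2 / 2)| ≤ φ ^ 4 / 9 :=
    le_trans (Real.cos_bound haabs) (by nlinarith [ha4, pow_nonneg hφ.le 4])
  have hE2 : |Real.cos b - (1 - b ^ 2 / 2)| ≤ φ ^ 4 / 9 :=
    le_trans (Real.cos_bound hbabs) (by nlinarith [hb4, pow_nonneg hφ.le 4])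
  have hb0' : 0 ≤ b := by rw [hbdef]; linarith
  have hble : b ≤ 11/100 := by rw [hbdef]; nlinarith
  have hb2 : b ^ 2 ≤ 1/50 := by nlinarith
  have hcb : (9:ℝ)/10 ≤ Real.cos b := by
    have := Real.one_sub_sq_div_two_le_cos (x := b)
    linarith
  have hcbne : Real.cos b ≠ 0 := by linarith
  have key : Real.cos a / Real.cos b - 1 - θ * φ
      = (Real.cos a - (1 + θ * φ) * Real.cos b) / Real.cos b := by
    field_simp; ring
  rw [key, abs_div, abs_of_pos (by linarith : (0:ℝ) < Real.cos b)]
  rw [div_le_iff₀ (by linarith)]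
  have hθφ : θ * φ ≤ 1/1000 := by nlinarith
  have hθφ0 : 0 ≤ θ * φ := by positivity
  have hP : |θ ^ 2 / 2 - φ * r - r ^ 2 / 2 + θ * φ * b ^ 2 / 2| ≤ 3 * φ ^ 4 := by
    have hr2' : r ^ 2 ≤ φ ^ 6 := by
      have := pow_le_pow_left₀ (abs_nonneg r) hr 2
      rw [sq_abs] at this; nlinarith
    have hθsq : θ ^ 2 ≤ φ ^ 4 := by nlinarith
    have hφr1 : φ * r ≤ φ ^ 4 := by nlinarith
    have hφr2 : -(φ ^ 4) ≤ φ * r := by nlinarith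
    have hb2' : b ^ 2 ≤ 2 * φ ^ 2 := by nlinarith
    have hθφ3 : θ * φ ≤ φ ^ 3 := by nlinarith
    have ht : θ * φ * b ^ 2 ≤ 2 * φ ^ 4 := by
      nlinarith [mul_le_mul hθφ3 hb2' (sq_nonneg b) (pow_nonneg hφ.le 3)]
    have ht0 : 0 ≤ θ * φ * b ^ 2 := by positivity
    have hφ6 : φ ^ 6 ≤ φ ^ 4 := by nlinarith
    rw [abs_le]
    constructor <;> linarith [sq_nonneg θ, sq_nonneg r, pow_nonneg hφ.le 4]
  have hid : Real.cos a - (1 + θ * φ) * Real.cos b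
      = (Real.cos a - (1 - a ^ 2 / 2)) - (1 + θ * φ) * (Real.cos b - (1 - b ^ 2 / 2))
        + (θ ^ 2 / 2 - φ * r - r ^ 2 / 2 + θ * φ * b ^ 2 / 2) := by
    rw [hadef, hbdef]; ring
  have hmul : |(1 + θ * φ) * (Real.cos b - (1 - b ^ 2 / 2))| ≤ 2 * (φ ^ 4 / 9) := by
    rw [abs_mul, abs_of_pos (by linarith : (0:ℝ) < 1 + θ * φ)]
    have := mul_le_mul (show (1:ℝ) + θ * φ ≤ 2 by linarith) hE2
      (abs_nonneg _) (by norm_num : (0:ℝ) ≤ 2)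
    linarith
  have hnum : |Real.cos a - (1 + θ * φ) * Real.cos b| ≤ 4 * φ ^ 4 := by
    rw [hid]
    have t1 := abs_add_le (Real.cos a - (1 - a ^ 2 / 2)
        - (1 + θ * φ) * (Real.cos b - (1 - b ^ 2 / 2)))
      (θ ^ 2 / 2 - φ * r - r ^ 2 / 2 + θ * φ * b ^ 2 / 2)
    have t2 := abs_sub (Real.cos a - (1 - a ^ 2 / 2))
      ((1 + θ * φ) * (Real.cos b - (1 - b ^ 2 / 2)))
    linarith [pow_nonneg hφ.le 4]
  nlinarith [mul_le_mul_of_nonneg_left hcb (by positivity : (0:ℝ) ≤ 10 * φ ^ 4)]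
end
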